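/- For c > 0, the function ρ_c(λ) = 1/(√(2π)·Γ(1+c)·|D₋c(iλ)|²) is strictly positive for all real λ, where D₋c(z) = (e^{-z²/4}/Γ(c)) · ∫₀^∞ e^{-zx - x²/2}·x^{c-1} dx. -/

import Mathlib

/-!
The key identity: with `w(x) = x^(c-1) e^{-x²/2}` on `(0, ∞)`, `A = 𝓕 w` and `B = 𝓕 (x w)`,
`B · conj A + A · conj B` is the Fourier transform of the symmetrised cross-correlation
`t ↦ ∫ (2s - t) w(s) w(s - t) ds`. The substitution `q = s (s - t)` turns this correlation into
`Γ(c) e^{-t²/2}`, whose Fourier transform is a nowhere vanishing Gaussian. Hence `A` has no real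
zeros, and `D₋c(iλ)` is a nonzero multiple of `A(λ / 2π)`.
-/

open MeasureTheory Complex

/-- The parabolic cylinder function `D₋c` via its integral representation (c > 0). -/
noncomputable def parabolicD (c : ℝ) (z : ℂ) : ℂ :=
  (Complex.exp (-z ^ 2 / 4) / (Real.Gamma c : ℂ)) *
    ∫ x in Set.Ioi (0 : ℝ), Complex.exp (-z * x - (x : ℂ) ^ 2 / 2) * ((x ^ (c - 1) : ℝ) : ℂ)

open Set FourierTransform Convolution ComplexConjugate

theorem MeasureTheory.Integrable.conj_comp_neg {f : ℝ → ℂ} (hf : Integrable f) :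
    Integrable fun x => conj (f (-x)) :=
  Complex.conjCLE.toContinuousLinearMap.integrable_comp hf.comp_neg

namespace Real

theorem fourier_add_apply {f g : ℝ → ℂ} (hf : Integrable f) (hg : Integrable g) (ξ : ℝ) :
    𝓕 (f + g) ξ = 𝓕 f ξ + 𝓕 g ξ := by
  simp only [fourier_eq, Pi.add_apply, smul_add]
  exact integral_add ((fourierIntegral_convergent_iff ξ).2 hf)
    ((fourierIntegral_convergent_iff ξ).2 hg)

theorem fourier_conj_comp_neg (f : ℝ → ℂ) (ξ : ℝ) :
    𝓕 (fun x => conj (f (-x))) ξ = conj (𝓕 f ξ) := by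
  rw [fourier_real_eq, fourier_real_eq, ← integral_conj, ← integral_neg_eq_self]
  congr 1 with v
  simp [Circle.smul_def, ← Circle.coe_inv_eq_conj, ← AddChar.map_neg_eq_inv]

theorem fourier_mul_conj_fourier {f g : ℝ → ℂ} (hf : Integrable f) (hg : Integrable g)
    (ξ : ℝ) :
    𝓕 f ξ * conj (𝓕 g ξ) =
      𝓕 (f ⋆[ContinuousLinearMap.mul ℂ ℂ] fun x => conj (g (-x))) ξ := by
  rw [fourier_mul_convolution_eq hf hg.conj_comp_neg, fourier_conj_comp_neg]

theorem fourier_const_mul_gaussian_ne_zero {a b : ℂ} (ha : a ≠ 0) (hb : 0 < b.re) (ξ : ℝ) :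
    𝓕 (fun x : ℝ => a * cexp (-b * x ^ 2)) ξ ≠ 0 := by
  have hπ : (π : ℂ) ≠ 0 := ofReal_ne_zero.2 pi_ne_zero
  have hb' : b / π ≠ 0 := div_ne_zero (fun h => by simp [h] at hb) hπ
  have hgauss := congrFun (fourier_gaussian_pi (b := b / π) (by
    rw [div_ofReal_re]; exact div_pos hb pi_pos)) ξ
  rw [show -(π : ℂ) * (b / π) = -b by field_simp] at hgauss
  rw [fourier_real_eq] at hgauss ⊢
  simp_rw [Circle.smul_def, smul_eq_mul, mul_left_comm _ a, integral_const_mul] at hgauss ⊢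
  rw [hgauss]
  exact mul_ne_zero ha (mul_ne_zero (one_div_ne_zero (cpow_ne_zero_iff.2 (Or.inl hb')))
    (Complex.exp_ne_zero _))

end Real

theorem image_mul_sub_Ioi_max (t : ℝ) : (fun s => s * (s - t)) '' Ioi (max t 0) = Ioi 0 := by
  ext q
  simp only [mem_image, mem_Ioi, max_lt_iff]
  constructor
  · rintro ⟨s, ⟨hts, hs⟩, rfl⟩
    exact mul_pos hs (sub_pos.2 hts)
  · intro hq
    set r := √(t ^ 2 + 4 * q)
    have hr : r ^ 2 = t ^ 2 + 4 * q := Real.sq_sqrt (by positivity)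
    have htr : |t| < r := abs_lt_of_sq_lt_sq (by linarith) (Real.sqrt_nonneg _)
    refine ⟨(t + r) / 2, ⟨?_, ?_⟩, by linear_combination hr / 4⟩ <;>
      linarith [le_abs_self t, neg_abs_le t]

theorem integral_Ioi_max_two_mul_sub_mul_comp (φ : ℝ → ℝ) (t : ℝ) :
    ∫ s in Ioi (max t 0), (2 * s - t) * φ (s * (s - t)) = ∫ q in Ioi 0, φ q := by
  have hderiv : ∀ s ∈ Ioi (max t 0),
      HasDerivWithinAt (fun s => s * (s - t)) (2 * s - t) (Ioi (max t 0)) s := fun s _ =>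
    (((hasDerivAt_id s).mul ((hasDerivAt_id s).sub_const t)).congr_deriv
      (by simp; ring)).hasDerivWithinAt
  have hmono : StrictMonoOn (fun s => s * (s - t)) (Ioi (max t 0)) := by
    intro x hx y hy hxy
    simp only [mem_Ioi, max_lt_iff] at hx hy
    nlinarith
  rw [← image_mul_sub_Ioi_max t,
    integral_image_eq_integral_abs_deriv_smul measurableSet_Ioi hderiv hmono.injOn]
  refine setIntegral_congr_fun measurableSet_Ioi fun s hs => ?_
  simp only [mem_Ioi, max_lt_iff] at hs
  rw [smul_eq_mul, abs_of_pos (by linarith)]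

noncomputable def parabolicWeight (c : ℝ) : ℝ → ℝ :=
  (Ioi 0).indicator fun x => x ^ (c - 1) * Real.exp (-x ^ 2 / 2)

section parabolicWeight

variable {c : ℝ}

theorem integrable_rpow_mul_parabolicWeight {s : ℝ} (hs : 0 < c + s) :
    Integrable fun x => x ^ s * parabolicWeight c x := by
  have h := integrableOn_rpow_mul_exp_neg_mul_sq (b := 1 / 2) (by norm_num) (s := c + s - 1)
    (by linarith)
  rw [← integrable_indicator_iff measurableSet_Ioi] at h
  refine h.congr (.of_forall fun x => ?_)
  by_cases hx : 0 < x
  · simp only [parabolicWeight, indicator_of_mem (mem_Ioi.2 hx), ← mul_assoc,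
      ← Real.rpow_add hx]
    ring_nf
  · simp [parabolicWeight, hx]

theorem integrable_parabolicWeight (hc : 0 < c) :
    Integrable fun x => (parabolicWeight c x : ℂ) :=
  (integrable_rpow_mul_parabolicWeight (s := 0) (by simpa)).ofReal.congr
    (.of_forall fun x => by simp)

theorem integrable_mul_parabolicWeight (hc : 0 < c) :
    Integrable fun x => (x * parabolicWeight c x : ℂ) :=
  (integrable_rpow_mul_parabolicWeight (s := 1) (by linarith)).ofReal.congr
    (.of_forall fun x => by simp)

theorem parabolicWeight_mul_parabolicWeight_sub {t s : ℝ} (hs : max t 0 < s) :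
    parabolicWeight c s * parabolicWeight c (s - t) =
      Real.exp (-(s * (s - t))) * (s * (s - t)) ^ (c - 1) * Real.exp (-t ^ 2 / 2) := by
  rw [max_lt_iff] at hs
  have hst : 0 < s - t := sub_pos.2 hs.1
  simp only [parabolicWeight, indicator, mem_Ioi, hs.2, hst, if_true]
  have hexp : Real.exp (-s ^ 2 / 2) * Real.exp (-(s - t) ^ 2 / 2) =
      Real.exp (-(s * (s - t))) * Real.exp (-t ^ 2 / 2) := by
    rw [← Real.exp_add, ← Real.exp_add]; ring_nf
  rw [Real.mul_rpow hs.2.le hst.le]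
  linear_combination s ^ (c - 1) * (s - t) ^ (c - 1) * hexp

theorem integral_two_mul_sub_mul_parabolicWeight_mul (hc : 0 < c) (t : ℝ) :
    ∫ s, (2 * s - t) * (parabolicWeight c s * parabolicWeight c (s - t)) =
      Real.Gamma c * Real.exp (-t ^ 2 / 2) := by
  have hvanish : ∀ s ∉ Ioi (max t 0),
      (2 * s - t) * (parabolicWeight c s * parabolicWeight c (s - t)) = 0 := by
    intro s hs
    rw [mem_Ioi, max_lt_iff, not_and_or, not_lt, not_lt, ← sub_nonpos] at hs
    rcases hs with hs | hs <;> simp [parabolicWeight, not_lt.2 hs]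
  rw [← setIntegral_eq_integral_of_forall_compl_eq_zero hvanish,
    setIntegral_congr_fun measurableSet_Ioi fun s hs => by
      rw [parabolicWeight_mul_parabolicWeight_sub hs, ← mul_assoc]]
  rw [integral_mul_const,
    integral_Ioi_max_two_mul_sub_mul_comp (fun q => Real.exp (-q) * q ^ (c - 1)),
    Real.Gamma_eq_integral hc]

theorem parabolicWeight_correlation_ae_eq (hc : 0 < c) :
    ((fun x => (x * parabolicWeight c x : ℂ)) ⋆[ContinuousLinearMap.mul ℂ ℂ]
        fun x => (parabolicWeight c (-x) : ℂ)) +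
      ((fun x => (parabolicWeight c x : ℂ)) ⋆[ContinuousLinearMap.mul ℂ ℂ]
        fun x => (-x * parabolicWeight c (-x) : ℂ)) =ᵐ[volume]
      fun t => (Real.Gamma c : ℂ) * cexp (-(1 / 2) * t ^ 2) := by
  filter_upwards [(integrable_mul_parabolicWeight hc).ae_convolution_exists
      (ContinuousLinearMap.mul ℂ ℂ) (integrable_parabolicWeight hc).comp_neg,
    (integrable_parabolicWeight hc).ae_convolution_exists (ContinuousLinearMap.mul ℂ ℂ)
      (integrable_mul_parabolicWeight hc).comp_neg] with t h₁ h₂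
  simp only [ConvolutionExistsAt, Pi.add_apply, convolution_def, ContinuousLinearMap.mul_apply',
    ← ofReal_neg, ← ofReal_mul, neg_sub] at h₁ h₂ ⊢
  rw [← integral_add h₁ h₂]
  simp only [← ofReal_add]
  rw [integral_complex_ofReal]
  calc _ = ((∫ s, (2 * s - t) * (parabolicWeight c s * parabolicWeight c (s - t)) : ℝ) : ℂ) := by
        congr 2 with s; ring
    _ = _ := by rw [integral_two_mul_sub_mul_parabolicWeight_mul hc t]; push_cast; ring_nf

theorem fourier_parabolicWeight_ne_zero (hc : 0 < c) (ξ : ℝ) :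
    𝓕 (fun x => (parabolicWeight c x : ℂ)) ξ ≠ 0 := by
  set g : ℝ → ℂ := fun x => parabolicWeight c x
  set h : ℝ → ℂ := fun x => x * parabolicWeight c x
  have hg : Integrable g := integrable_parabolicWeight hc
  have hh : Integrable h := integrable_mul_parabolicWeight hc
  have hW : 𝓕 h ξ * conj (𝓕 g ξ) + 𝓕 g ξ * conj (𝓕 h ξ) =
      𝓕 (fun t : ℝ => (Real.Gamma c : ℂ) * cexp (-(1 / 2) * t ^ 2)) ξ := by
    rw [Real.fourier_mul_conj_fourier hh hg, Real.fourier_mul_conj_fourier hg hh,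
      ← Real.fourier_add_apply (hh.integrable_convolution _ hg.conj_comp_neg)
        (hg.integrable_convolution _ hh.conj_comp_neg)]
    refine Real.fourier_congr_ae ?_ ξ
    simpa [g, h] using parabolicWeight_correlation_ae_eq hc
  intro h0
  rw [h0, map_zero, mul_zero, zero_mul, add_zero] at hW
  exact Real.fourier_const_mul_gaussian_ne_zero (ofReal_ne_zero.2 (Real.Gamma_pos_of_pos hc).ne')
    (by norm_num) ξ hW.symm

end parabolicWeight

theorem setIntegral_Ioi_eq_fourier_parabolicWeight (c l : ℝ) :
    ∫ x in Ioi (0 : ℝ), cexp (-(I * l) * x - (x : ℂ) ^ 2 / 2) * ((x ^ (c - 1) : ℝ) : ℂ) =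
      𝓕 (fun x => (parabolicWeight c x : ℂ)) (l / (2 * Real.pi)) := by
  symm
  rw [Real.fourier_real_eq_integral_exp_smul,
    ← setIntegral_eq_integral_of_forall_compl_eq_zero (s := Ioi 0) fun x hx => by
      simp [parabolicWeight, indicator_of_notMem hx]]
  refine setIntegral_congr_fun measurableSet_Ioi fun x hx => ?_
  rw [parabolicWeight, indicator_of_mem hx, smul_eq_mul, ofReal_mul (_ ^ _), ofReal_exp,
    mul_left_comm, ← Complex.exp_add, mul_comm]
  congr 2
  push_cast
  field_simp
  ring

theorem parabolicD_I_mul_ne_zero {c : ℝ} (hc : 0 < c) (l : ℝ) : parabolicD c (I * l) ≠ 0 := by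
  rw [parabolicD, setIntegral_Ioi_eq_fourier_parabolicWeight]
  exact mul_ne_zero (div_ne_zero (Complex.exp_ne_zero _)
    (ofReal_ne_zero.2 (Real.Gamma_pos_of_pos hc).ne')) (fourier_parabolicWeight_ne_zero hc _)

/-- for `c > 0`, the Askey–Wimp–Kerov density
`ρ_c(λ) = 1/(√(2π)·Γ(1+c)·|D₋c(iλ)|²)` is strictly positive for all real `λ`
(in particular `D₋c(iλ) ≠ 0`). -/
theorem stmt_8 (c : ℝ) (hc : 0 < c) :
    ∀ l : ℝ, 0 < 1 / (Real.sqrt (2 * Real.pi) * Real.Gamma (1 + c)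
      * ‖parabolicD c (Complex.I * l)‖ ^ 2) := by
  intro l
  have hD := norm_pos_iff.2 (parabolicD_I_mul_ne_zero hc l)
  have hΓ := Real.Gamma_pos_of_pos (show 0 < 1 + c by linarith)
  positivity
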